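/- arXiv:2001.08660 — 5 statements merged into one kernel-verified Lean document; each statement's English description precedes it below -/
import Mathlib

section
/- Let M be a finitely generated 𝔖-module and let f : M → M be an additive map satisfying f(am) = φ(a)f(m) for all a ∈ 𝔖 and m ∈ M, and f(M) ⊆ uM. Then f − id_M : M → M is bijective. -/
open PowerSeries TensorProduct

attribute [local instance] ZMod.algebra

/-!
Since `φ u ∈ u𝔖`, the condition `f(M) ⊆ uM` propagates to `f(uⁿM) ⊆ uⁿ⁺¹M`, so `f` is
topologically nilpotent for the `u`-adic topology, and `f - id` is inverted by the geometric
series `-(1 + f + f² + ⋯)`. This converges and is unique because `M`, being finite over the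
Noetherian `u`-adically complete ring `𝔖`, is itself `u`-adically complete and separated.
-/

section AdicCompleteness

variable {R : Type*} [CommRing R] (I : Ideal R) (M : Type*) [AddCommGroup M] [Module R M]

theorem IsPrecomplete.of_finite [IsPrecomplete I R] [Module.Finite R M] : IsPrecomplete I M := by
  refine AdicCompletion.of_surjective_iff.mp fun y => ?_
  obtain ⟨t, rfl⟩ := AdicCompletion.ofTensorProduct_surjective_of_finite I M y
  induction t using TensorProduct.induction_on with
  | zero => exact ⟨0, by simp⟩
  | tmul r x =>
    obtain ⟨r, rfl⟩ := AdicCompletion.of_surjective I R r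
    refine ⟨r • x, ?_⟩
    rw [AdicCompletion.ofTensorProduct_tmul, map_smul, ← algebraMap_smul (AdicCompletion I R) r,
      AdicCompletion.algebraMap_apply, Algebra.algebraMap_self, RingHom.id_apply]
  | add a b ha hb =>
    obtain ⟨a, ha⟩ := ha
    obtain ⟨b, hb⟩ := hb
    exact ⟨a + b, by rw [map_add, map_add, ha, hb]⟩

theorem IsAdicComplete.of_finite [IsNoetherianRing R] [IsAdicComplete I R] [Module.Finite R M] :
    IsAdicComplete I M where
  toIsHausdorff := .of_le_jacobson I M (IsAdicComplete.le_jacobson_bot I)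
  toIsPrecomplete := .of_finite I M

end AdicCompleteness

section AdicContraction

variable {R M : Type*} [CommRing R] [AddCommGroup M] [Module R M]

def IsAdicContraction (I : Ideal R) (g : M →+ M) : Prop :=
  ∀ n, Set.MapsTo g (I ^ n • ⊤ : Submodule R M) (I ^ (n + 1) • ⊤ : Submodule R M)

variable {I : Ideal R} {g : M →+ M}

theorem IsAdicContraction.iterate_mem (hg : IsAdicContraction I g) (x : M) (n : ℕ) :
    g^[n] x ∈ (I ^ n • ⊤ : Submodule R M) := by
  induction n with
  | zero => simp
  | succ n ih => exact Function.iterate_succ_apply' g n x ▸ hg n ih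

theorem IsAdicContraction.eq_zero_of_apply_eq_self [IsHausdorff I M] (hg : IsAdicContraction I g)
    {x : M} (hx : g x = x) : x = 0 := by
  refine IsHausdorff.haus ‹_› x fun n => SModEq.zero.mpr ?_
  have := hg.iterate_mem x n
  rwa [Function.iterate_fixed hx] at this

theorem IsAdicContraction.injective_sub_self [IsHausdorff I M] (hg : IsAdicContraction I g) :
    Function.Injective fun x => g x - x := by
  intro a b hab
  refine sub_eq_zero.mp (hg.eq_zero_of_apply_eq_self ?_)
  rw [map_sub]
  exact sub_eq_sub_iff_sub_eq_sub.mp hab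

theorem IsAdicContraction.surjective_sub_self [IsAdicComplete I M] (hg : IsAdicContraction I g) :
    Function.Surjective fun x => g x - x := by
  intro y
  set s : ℕ → M := fun n => ∑ i ∈ Finset.range n, g^[i] y
  have hs_succ (n : ℕ) : g (s n) = s (n + 1) - y := by
    simp only [s, map_sum, Finset.sum_range_succ', Function.iterate_zero_apply,
      add_sub_cancel_right, Function.iterate_succ_apply']
  have hs_cauchy {m n : ℕ} (hmn : m ≤ n) : s m ≡ s n [SMOD (I ^ m • ⊤ : Submodule R M)] := by
    rw [SModEq.comm, SModEq.sub_mem, ← Finset.sum_Ico_eq_sub _ hmn]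
    exact Submodule.sum_mem _ fun i hi =>
      Submodule.pow_smul_top_le I M (Finset.mem_Ico.mp hi).1 (hg.iterate_mem y i)
  obtain ⟨L, hL⟩ := IsPrecomplete.prec' _ hs_cauchy
  refine ⟨-L, ?_⟩
  rw [IsHausdorff.eq_iff_smodEq (I := I)]
  intro n
  have hL_succ : L ≡ s (n + 1) [SMOD (I ^ n • ⊤ : Submodule R M)] :=
    ((hL (n + 1)).mono (Submodule.pow_smul_top_le I M n.le_succ)).symm
  have hgL : g L ≡ g (s n) [SMOD (I ^ n • ⊤ : Submodule R M)] := by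
    rw [SModEq.sub_mem, ← map_sub]
    exact Submodule.pow_smul_top_le I M n.le_succ (hg n (SModEq.sub_mem.mp (hL n).symm))
  calc g (-L) - -L = L - g L := by rw [map_neg, neg_sub_neg]
    _ ≡ s (n + 1) - g (s n) [SMOD (I ^ n • ⊤ : Submodule R M)] := hL_succ.sub hgL
    _ = y := by rw [hs_succ, sub_sub_cancel]

theorem IsAdicContraction.bijective_sub_self [IsAdicComplete I M] (hg : IsAdicContraction I g) :
    Function.Bijective fun x => g x - x :=
  ⟨hg.injective_sub_self, hg.surjective_sub_self⟩

theorem LinearMap.isAdicContraction {φ : R →+* R} (hφ : I.map φ ≤ I) (f : M →ₛₗ[φ] M)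
    (hf : ∀ m, f m ∈ (I • ⊤ : Submodule R M)) : IsAdicContraction I f.toAddMonoidHom := by
  intro n x hx
  refine Submodule.smul_induction_on hx (fun a ha m _ => ?_) (fun x y hx hy => ?_)
  · have hφa : φ a ∈ I ^ n :=
      Ideal.pow_right_mono hφ n (Ideal.map_pow φ I n ▸ Ideal.mem_map_of_mem φ ha)
    rw [pow_succ, Submodule.mul_smul]
    exact (map_smulₛₗ f a m).symm ▸ Submodule.smul_mem_smul hφa (hf m)
  · rw [map_add]
    exact add_mem hx hy

end AdicContraction

theorem statement7_general
    (p : ℕ) [Fact p.Prime] (k 𝔽 : Type) [Field k] [Fintype k] [CharP k p]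
    [Field 𝔽] [Fintype 𝔽] [CharP 𝔽 p]
    (φ : PowerSeries (k ⊗[ZMod p] 𝔽) →+* PowerSeries (k ⊗[ZMod p] 𝔽))
    (hφ1 : ∀ (f : PowerSeries (k ⊗[ZMod p] 𝔽)) (n : ℕ),
      PowerSeries.coeff (p * n) (φ f) =
        PowerSeries.constantCoeff (φ (PowerSeries.C (PowerSeries.coeff n f))))
    (M : Type) [AddCommGroup M] [Module (PowerSeries (k ⊗[ZMod p] 𝔽)) M]
    [Module.Finite (PowerSeries (k ⊗[ZMod p] 𝔽)) M]
    (f : M → M)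
    (hadd : ∀ x y, f (x + y) = f x + f y)
    (hsmul : ∀ (a : PowerSeries (k ⊗[ZMod p] 𝔽)) (m : M), f (a • m) = φ a • f m)
    (him : ∀ m : M, ∃ m' : M, f m = (PowerSeries.X : PowerSeries (k ⊗[ZMod p] 𝔽)) • m') :
    Function.Bijective (fun m : M => f m - m) := by
  have : IsNoetherianRing (k ⊗[ZMod p] 𝔽) := .of_finite (ZMod p) _
  have : IsAdicComplete (Ideal.span {(X : PowerSeries (k ⊗[ZMod p] 𝔽))}) M := .of_finite _ M
  have hφX : X ∣ φ X := by
    rw [X_dvd_iff, ← coeff_zero_eq_constantCoeff_apply, ← mul_zero p, hφ1, coeff_zero_X,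
      map_zero, map_zero, map_zero]
  have hφ : (Ideal.span {X}).map φ ≤ Ideal.span {X} := by
    rw [Ideal.map_span, Set.image_singleton, Ideal.span_singleton_le_span_singleton]
    exact hφX
  let F : M →ₛₗ[φ] M := { toFun := f, map_add' := hadd, map_smul' := hsmul }
  have hF : ∀ m, F m ∈ (Ideal.span {X} • ⊤ : Submodule _ M) := fun m => by
    obtain ⟨m', hm'⟩ := him m
    exact hm' ▸ Submodule.smul_mem_smul (Ideal.mem_span_singleton_self X) Submodule.mem_top
  exact (LinearMap.isAdicContraction hφ F hF).bijective_sub_self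

/-- if `M` is a finitely generated `𝔖`-module, `𝔖 = (k ⊗_{𝔽_p} 𝔽)[[u]]`,
and `f : M → M` is additive with `f(a•m) = φ(a)•f(m)` and `f(M) ⊆ uM`, then
`f - id` is bijective. -/
theorem statement7
    (p : ℕ) [Fact p.Prime] (k 𝔽 : Type) [Field k] [Fintype k] [CharP k p]
    [Field 𝔽] [Fintype 𝔽] [CharP 𝔽 p]
    (φ : PowerSeries (k ⊗[ZMod p] 𝔽) →+* PowerSeries (k ⊗[ZMod p] 𝔽))
    (hφC : ∀ (a : k) (b : 𝔽),
      φ (PowerSeries.C (a ⊗ₜ[ZMod p] b)) = PowerSeries.C ((a ^ p) ⊗ₜ[ZMod p] b))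
    (hφ0 : ∀ (f : PowerSeries (k ⊗[ZMod p] 𝔽)) (m : ℕ), ¬ p ∣ m →
      PowerSeries.coeff m (φ f) = 0)
    (hφ1 : ∀ (f : PowerSeries (k ⊗[ZMod p] 𝔽)) (n : ℕ),
      PowerSeries.coeff (p * n) (φ f) =
        PowerSeries.constantCoeff (φ (PowerSeries.C (PowerSeries.coeff n f))))
    (M : Type) [AddCommGroup M] [Module (PowerSeries (k ⊗[ZMod p] 𝔽)) M]
    [Module.Finite (PowerSeries (k ⊗[ZMod p] 𝔽)) M]
    (f : M → M)
    (hadd : ∀ x y, f (x + y) = f x + f y)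
    (hsmul : ∀ (a : PowerSeries (k ⊗[ZMod p] 𝔽)) (m : M), f (a • m) = φ a • f m)
    (him : ∀ m : M, ∃ m' : M, f m = (PowerSeries.X : PowerSeries (k ⊗[ZMod p] 𝔽)) • m') :
    Function.Bijective (fun m : M => f m - m) :=
  statement7_general p k 𝔽 φ hφ1 M f hadd hsmul him
end

section
/- Let A be a commutative ℚ-algebra, ∂ : A → A a derivation, H ∈ A with ∂(H) = −1 − H, M an A-module, and 𝒩 : M → M an additive map satisfying 𝒩(am) = ∂(a)m + a𝒩(m) for all a ∈ A, m ∈ M. For x ∈ M define x^{(0)} = x and, for i ≥ 1, x^{(i)} = Σ_{l=0}^{i−1} (H^l/l!)·𝒩^l(x^{(i−1)}). Then for every i ≥ 0, the element x^{(i)} − x lies in the subgroup of (M,+) generated by the elements (H^a/a'!)·𝒩^b(x) with a ≥ 1, b ≥ 1 and 1 ≤ a' ≤ a. -/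
noncomputable section

/-- The sequence `x^{(i)}`: `x^{(0)} = x` and
`x^{(i)} = ∑_{l=0}^{i-1} (H^l/l!)·𝒩^l(x^{(i-1)})`. -/
def glsSeq {A : Type} [CommRing A] [Algebra ℚ A]
    {M : Type} [AddCommGroup M] [Module A M] [Module ℚ M] [IsScalarTower ℚ A M]
    (H : A) (N : M → M) (x : M) : ℕ → M
  | 0 => x
  | (i + 1) => ∑ l ∈ Finset.range (i + 1),
      ((l.factorial : ℚ))⁻¹ • (H ^ l • (N^[l] (glsSeq H N x i)))

section Aux

variable {A : Type} [CommRing A] [Algebra ℚ A]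
    {M : Type} [AddCommGroup M] [Module A M] [Module ℚ M] [IsScalarTower ℚ A M]

set_option linter.unusedSectionVars false

/-- Iterated Leibniz rule. -/
theorem gls_iter_leibniz (D : Derivation ℚ A A) (N : M → M)
    (hadd : ∀ x y, N (x + y) = N x + N y)
    (hleib : ∀ (a : A) (m : M), N (a • m) = (D a) • m + a • N m)
    (l : ℕ) (c : A) (m : M) :
    N^[l] (c • m) = ∑ j ∈ Finset.range (l + 1),
      (l.choose j) • ((⇑D)^[j] c • N^[l - j] m) := by
  have Nsum : ∀ (s : Finset ℕ) (f : ℕ → M), N (∑ j ∈ s, f j) = ∑ j ∈ s, N (f j) :=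
    fun s f => map_sum (AddMonoidHom.mk' N hadd) f s
  have Nnsmul : ∀ (k : ℕ) (y : M), N (k • y) = k • N y :=
    fun k y => map_nsmul (AddMonoidHom.mk' N hadd) k y
  induction l with
  | zero => simp
  | succ l ih =>
    rw [Function.iterate_succ_apply', ih, Nsum]
    have e1 : ∀ j ∈ Finset.range (l+1),
        N ((l.choose j) • ((⇑D)^[j] c • N^[l - j] m))
        = (l.choose j) • ((⇑D)^[j+1] c • N^[l - j] m)
          + (l.choose j) • ((⇑D)^[j] c • N^[(l - j)+1] m) := by
      intro j hj
      rw [Nnsmul, hleib, smul_add, Function.iterate_succ_apply' (⇑D) j c,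
        Function.iterate_succ_apply' N (l-j) m]
    rw [Finset.sum_congr rfl e1, Finset.sum_add_distrib]
    rw [Finset.sum_range_succ' (fun j => ((l+1).choose j) • ((⇑D)^[j] c • N^[l + 1 - j] m)) (l+1)]
    have e2 : ∀ j ∈ Finset.range (l+1),
        ((l+1).choose (j+1)) • ((⇑D)^[j+1] c • N^[l + 1 - (j+1)] m)
        = (l.choose j) • ((⇑D)^[j+1] c • N^[l - j] m)
          + (l.choose (j+1)) • ((⇑D)^[j+1] c • N^[l - j] m) := by
      intro j hj
      rw [Nat.succ_sub_succ, Nat.choose_succ_succ, add_nsmul]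
    rw [Finset.sum_congr rfl e2, Finset.sum_add_distrib]
    have e3 : ∑ j ∈ Finset.range (l+1), (l.choose j) • ((⇑D)^[j] c • N^[(l - j)+1] m)
        = (∑ j ∈ Finset.range (l+1), (l.choose (j+1)) • ((⇑D)^[j+1] c • N^[l - j] m))
          + ((l+1).choose 0) • ((⇑D)^[0] c • N^[l + 1 - 0] m) := by
      rw [Finset.sum_range_succ' (fun j => (l.choose j) • ((⇑D)^[j] c • N^[(l - j)+1] m)) l]
      rw [Finset.sum_range_succ (fun j => (l.choose (j+1)) • ((⇑D)^[j+1] c • N^[l - j] m)) l]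
      rw [Nat.choose_eq_zero_of_lt (Nat.lt_succ_self l)]
      simp only [zero_smul, add_zero, Nat.choose_zero_right, one_smul, Nat.sub_zero,
        Function.iterate_zero_apply, Nat.sub_self]
      congr 1
      refine Finset.sum_congr rfl (fun j hj => ?_)
      have hjl : j + 1 ≤ l := Finset.mem_range.mp hj
      have hs : l - (j+1) + 1 = l - j := by omega
      rw [hs]
    rw [e3]
    abel

/-- The generating set keeping track of exponents and denominators in `A`. -/
def glsG (H : A) (p : ℕ) : Set A :=
  {z : A | ∃ e : ℕ, e ≤ p ∧ z = ((p.factorial : ℚ) / (e.factorial : ℚ)) • H ^ e}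

theorem gls_D_iter_mem (D : Derivation ℚ A A) (H : A) (hH : D H = -1 - H)
    (p j : ℕ) : (⇑D)^[j] (H ^ p) ∈ AddSubgroup.closure (glsG H p) := by
  induction j with
  | zero =>
    exact AddSubgroup.subset_closure ⟨p, le_refl p, by
      simp [div_self (Nat.cast_ne_zero.mpr p.factorial_ne_zero : (p.factorial:ℚ) ≠ 0)]⟩
  | succ j ih =>
    rw [Function.iterate_succ_apply']
    -- closure is stable under D
    have stable : ∀ z ∈ glsG H p, D z ∈ AddSubgroup.closure (glsG H p) := by
      rintro z ⟨e, he, rfl⟩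
      rw [Derivation.map_smul]
      match e, he with
      | 0, he =>
        simp only [pow_zero, Derivation.map_one_eq_zero, smul_zero]
        exact zero_mem _
      | (e+1), he =>
        rw [Derivation.leibniz_pow, hH]
        have hsub : (e + 1) - 1 = e := rfl
        rw [hsub]
        have h1 : (H : A) ^ e • ((-1 : A) - H) = -(H ^ e) - H ^ (e+1) := by
          rw [smul_eq_mul]; ring
        have hq : ((p.factorial : ℚ) / ((e+1).factorial : ℚ)) * ((e+1 : ℕ) : ℚ)
            = (p.factorial : ℚ) / (e.factorial : ℚ) := by
          rw [Nat.factorial_succ]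
          have h0 : ((e.factorial : ℚ)) ≠ 0 := Nat.cast_ne_zero.mpr e.factorial_ne_zero
          have h0' : ((e+1 : ℕ) : ℚ) ≠ 0 := Nat.cast_ne_zero.mpr (Nat.succ_ne_zero e)
          push_cast
          push_cast at h0'
          field_simp
        have expand : ((p.factorial : ℚ) / ((e+1).factorial : ℚ)) •
            ((e+1) • (H ^ e • ((-1 : A) - H)))
            = -(((p.factorial : ℚ) / (e.factorial : ℚ)) • H ^ e)
              - ((p.factorial : ℚ) / (e.factorial : ℚ)) • H ^ (e+1) := by
          rw [h1, ← Nat.cast_smul_eq_nsmul ℚ (e+1), smul_smul, hq, smul_sub, smul_neg]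
        rw [expand]
        have g1 : ((p.factorial : ℚ) / (e.factorial : ℚ)) • H ^ e ∈
            AddSubgroup.closure (glsG H p) :=
          AddSubgroup.subset_closure ⟨e, le_of_lt (Nat.lt_of_lt_of_le (Nat.lt_succ_self e) he), rfl⟩
        have g2 : ((p.factorial : ℚ) / (e.factorial : ℚ)) • H ^ (e+1) ∈
            AddSubgroup.closure (glsG H p) := by
          have hq2 : ((p.factorial : ℚ) / (e.factorial : ℚ)) • H ^ (e+1)
              = (e+1) • (((p.factorial : ℚ) / ((e+1).factorial : ℚ)) • H ^ (e+1)) := by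
            rw [← Nat.cast_smul_eq_nsmul ℚ (e+1), smul_smul, mul_comm, hq]
          rw [hq2]
          have gmem : (((p.factorial : ℚ) / ((e+1).factorial : ℚ)) • H ^ (e+1)) ∈ glsG H p :=
            ⟨e+1, he, rfl⟩
          exact AddSubgroup.nsmul_mem _ (AddSubgroup.subset_closure gmem) _
        exact sub_mem (neg_mem g1) g2
    have hle : AddSubgroup.map (AddMonoidHom.mk' (⇑D) (map_add D))
          (AddSubgroup.closure (glsG H p)) ≤ AddSubgroup.closure (glsG H p) := by
      rw [AddMonoidHom.map_closure]
      refine (AddSubgroup.closure_le _).mpr ?_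
      rintro y ⟨z, hz, rfl⟩
      exact stable z hz
    exact hle (AddSubgroup.mem_map.mpr ⟨_, ih, rfl⟩)

end Aux

/-- with `A` a commutative `ℚ`-algebra, `∂` a derivation, `H ∈ A` with
`∂H = -1 - H`, `M` an `A`-module and `𝒩 : M → M` additive with
`𝒩(am) = ∂(a)m + a𝒩(m)`, the element `x^{(i)} - x` lies in the additive subgroup of `M`
generated by the elements `(H^a/a'!)·𝒩^b(x)` with `a ≥ 1`, `b ≥ 1`, `1 ≤ a' ≤ a`. -/
theorem statement14
    (A : Type) [CommRing A] [Algebra ℚ A]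
    (D : Derivation ℚ A A) (H : A) (hH : D H = -1 - H)
    (M : Type) [AddCommGroup M] [Module A M] [Module ℚ M] [IsScalarTower ℚ A M]
    (N : M → M)
    (hadd : ∀ x y, N (x + y) = N x + N y)
    (hleib : ∀ (a : A) (m : M), N (a • m) = (D a) • m + a • N m)
    (x : M) (i : ℕ) :
    glsSeq H N x i - x ∈
      AddSubgroup.closure {y : M | ∃ (a b a' : ℕ), 1 ≤ a ∧ 1 ≤ b ∧ 1 ≤ a' ∧ a' ≤ a ∧
        y = ((a'.factorial : ℚ))⁻¹ • (H ^ a • (N^[b] x))} := by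
  -- basic facts about N
  have Niter_add : ∀ (l : ℕ) (a b : M), N^[l] (a + b) = N^[l] a + N^[l] b :=
    fun l a b => iterate_map_add (AddMonoidHom.mk' N hadd) l a b
  have hcomm : ∀ (q : ℚ) (a : A) (m : M), a • (q • m) = q • (a • m) := by
    intro q a m
    rw [← algebraMap_smul A q m, ← algebraMap_smul A q (a • m), smul_smul, smul_smul, mul_comm]
  have Nq : ∀ (q : ℚ) (m : M), N (q • m) = q • N m := by
    intro q m
    rw [← algebraMap_smul A q m, hleib, Derivation.map_algebraMap, zero_smul, zero_add,
      algebraMap_smul]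
  have Niterq : ∀ (l : ℕ) (q : ℚ) (m : M), N^[l] (q • m) = q • N^[l] m := by
    intro l
    induction l with
    | zero => intro q m; simp
    | succ l ih =>
      intro q m
      rw [Function.iterate_succ_apply', Function.iterate_succ_apply', ih, Nq]
  -- the intermediate generating set
  set V : Set M := {y : M | ∃ (p b : ℕ) (n : ℤ), 1 ≤ p ∧ 1 ≤ b ∧
    y = ((n : ℚ) / (p.factorial : ℚ)) • (H ^ p • N^[b] x)} with hV
  -- V is contained in the target closure
  set S : Set M := {y : M | ∃ (a b a' : ℕ), 1 ≤ a ∧ 1 ≤ b ∧ 1 ≤ a' ∧ a' ≤ a ∧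
    y = ((a'.factorial : ℚ))⁻¹ • (H ^ a • (N^[b] x))} with hS
  have hVS : AddSubgroup.closure V ≤ AddSubgroup.closure S := by
    refine (AddSubgroup.closure_le _).mpr ?_
    rintro y ⟨p, b, n, hp, hb, rfl⟩
    have : ((n : ℚ) / (p.factorial : ℚ)) • (H ^ p • N^[b] x)
        = n • (((p.factorial : ℚ))⁻¹ • (H ^ p • N^[b] x)) := by
      rw [← Int.cast_smul_eq_zsmul ℚ, smul_smul, div_eq_mul_inv]
    rw [this]
    have gmem : (((p.factorial : ℚ))⁻¹ • (H ^ p • N^[b] x)) ∈ S :=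
      ⟨p, b, p, hp, hb, hp, le_refl p, rfl⟩
    exact AddSubgroup.zsmul_mem _ (AddSubgroup.subset_closure gmem) n
  -- key membership lemma
  have keymem : ∀ (l b' p : ℕ), 1 ≤ l → 1 ≤ b' → ∀ (r : ℚ), (∃ n : ℤ,
      r = (n : ℚ) / ((p.factorial : ℚ) * (l.factorial : ℚ))) →
      ∀ c ∈ AddSubgroup.closure (glsG H p),
      r • ((H ^ l * c) • N^[b'] x) ∈ AddSubgroup.closure V := by
    intro l b' p hl hb' r hr c hc
    obtain ⟨n, rfl⟩ := hr
    set ψ : A →+ M := AddMonoidHom.mk' (fun c => ((n : ℚ) / ((p.factorial : ℚ)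
        * (l.factorial : ℚ))) • ((H ^ l * c) • N^[b'] x)) (by
      intro c₁ c₂
      simp only [mul_add, add_smul, smul_add]) with hψ
    show ψ c ∈ AddSubgroup.closure V
    have stable : ∀ z ∈ glsG H p, ψ z ∈ AddSubgroup.closure V := by
      rintro z ⟨e, he, rfl⟩
      have hgen : ψ (((p.factorial : ℚ) / (e.factorial : ℚ)) • H ^ e)
          = (((n * ((l+e).choose e : ℤ) : ℤ) : ℚ) / (((l+e).factorial : ℚ)))
            • (H ^ (l + e) • N^[b'] x) := by
        show ((n : ℚ) / ((p.factorial : ℚ) * (l.factorial : ℚ)))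
            • ((H ^ l * (((p.factorial : ℚ) / (e.factorial : ℚ)) • H ^ e)) • N^[b'] x) = _
        rw [mul_smul_comm, ← pow_add]
        rw [smul_assoc, smul_smul]
        congr 1
        have hfact : (((l+e).choose e : ℚ)) * (e.factorial : ℚ) * (l.factorial : ℚ)
            = ((l+e).factorial : ℚ) := by
          have h := Nat.choose_mul_factorial_mul_factorial (Nat.le_add_left e l)
          have h2 : l + e - e = l := by omega
          rw [h2] at h
          exact_mod_cast congrArg (Nat.cast : ℕ → ℚ) h
        have h0 : (p.factorial : ℚ) ≠ 0 := Nat.cast_ne_zero.mpr p.factorial_ne_zero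
        have h1 : (l.factorial : ℚ) ≠ 0 := Nat.cast_ne_zero.mpr l.factorial_ne_zero
        have h2 : (e.factorial : ℚ) ≠ 0 := Nat.cast_ne_zero.mpr e.factorial_ne_zero
        have h3 : ((l+e).factorial : ℚ) ≠ 0 := Nat.cast_ne_zero.mpr (l+e).factorial_ne_zero
        push_cast
        field_simp
        rw [← hfact]
        ring
      rw [hgen]
      exact AddSubgroup.subset_closure
        ⟨l + e, b', n * ((l+e).choose e : ℤ), le_trans hl (Nat.le_add_right l e), hb', rfl⟩
    have hmap : AddSubgroup.map ψ (AddSubgroup.closure (glsG H p))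
        ≤ AddSubgroup.closure V := by
      rw [AddMonoidHom.map_closure]
      refine (AddSubgroup.closure_le _).mpr ?_
      rintro y ⟨z, hz, rfl⟩
      exact stable z hz
    exact hmap (AddSubgroup.mem_map.mpr ⟨_, hc, rfl⟩)
  -- the maps Φ_l preserve closure V for l ≥ 1
  have Phi_mem : ∀ (l : ℕ), 1 ≤ l → ∀ g ∈ AddSubgroup.closure V,
      ((l.factorial : ℚ))⁻¹ • (H ^ l • N^[l] g) ∈ AddSubgroup.closure V := by
    intro l hl
    set Φ : M →+ M := AddMonoidHom.mk' (fun m => ((l.factorial : ℚ))⁻¹ • (H ^ l • N^[l] m)) (by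
      intro m₁ m₂
      simp only [Niter_add, smul_add]) with hΦ
    intro g hg
    show Φ g ∈ AddSubgroup.closure V
    have stable : ∀ v ∈ V, Φ v ∈ AddSubgroup.closure V := by
      rintro v ⟨p, b, n, hp, hb, rfl⟩
      show ((l.factorial : ℚ))⁻¹ • (H ^ l •
        N^[l] (((n : ℚ) / (p.factorial : ℚ)) • (H ^ p • N^[b] x))) ∈ _
      rw [Niterq, hcomm, smul_smul]
      rw [gls_iter_leibniz D N hadd hleib l (H ^ p) (N^[b] x)]
      rw [Finset.smul_sum, Finset.smul_sum]
      refine AddSubgroup.sum_mem _ (fun j hj => ?_)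
      have hjl : j ≤ l := Nat.lt_succ_iff.mp (Finset.mem_range.mp hj)
      rw [← Function.iterate_add_apply N (l - j) b x]
      rw [← Nat.cast_smul_eq_nsmul ℚ (l.choose j), hcomm, smul_smul, smul_smul]
      refine keymem l (l - j + b) p hl (le_trans hb (Nat.le_add_left b (l - j))) _
        ⟨n * (l.choose j : ℤ), ?_⟩ _ (gls_D_iter_mem D H hH p j)
      have h0 : (p.factorial : ℚ) ≠ 0 := Nat.cast_ne_zero.mpr p.factorial_ne_zero
      have h1 : (l.factorial : ℚ) ≠ 0 := Nat.cast_ne_zero.mpr l.factorial_ne_zero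
      push_cast
      field_simp
      try tauto
      try ring
    have hmap : AddSubgroup.map Φ (AddSubgroup.closure V) ≤ AddSubgroup.closure V := by
      rw [AddMonoidHom.map_closure]
      refine (AddSubgroup.closure_le _).mpr ?_
      rintro y ⟨z, hz, rfl⟩
      exact stable z hz
    exact hmap (AddSubgroup.mem_map.mpr ⟨_, hg, rfl⟩)
  -- main induction
  have main : ∀ k, glsSeq H N x k - x ∈ AddSubgroup.closure V := by
    intro k
    induction k with
    | zero =>
      show glsSeq H N x 0 - x ∈ _
      simp only [glsSeq, sub_self]
      exact zero_mem _
    | succ i ih =>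
      set g := glsSeq H N x i - x with hg
      have hxg : glsSeq H N x i = x + g := by
        rw [hg]; abel
      have expand : glsSeq H N x (i+1)
          = (∑ l ∈ Finset.range (i+1), ((l.factorial : ℚ))⁻¹ • (H ^ l • N^[l] x))
            + ∑ l ∈ Finset.range (i+1), ((l.factorial : ℚ))⁻¹ • (H ^ l • N^[l] g) := by
        simp only [glsSeq]
        rw [← Finset.sum_add_distrib]
        refine Finset.sum_congr rfl fun l _ => ?_
        rw [hxg, Niter_add, smul_add, smul_add]
      have m1 : (∑ l ∈ Finset.range (i+1), ((l.factorial : ℚ))⁻¹ • (H ^ l • N^[l] x))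
          = x + ∑ l ∈ Finset.range i, (((l+1).factorial : ℚ))⁻¹ • (H ^ (l+1) • N^[l+1] x) := by
        rw [Finset.sum_range_succ' (fun l => ((l.factorial : ℚ))⁻¹ • (H ^ l • N^[l] x)) i]
        simp only [Nat.factorial_zero, Nat.cast_one, inv_one, one_smul, pow_zero,
          Function.iterate_zero_apply]
        rw [add_comm]
      have key : glsSeq H N x (i+1) - x
          = (∑ l ∈ Finset.range i, (((l+1).factorial : ℚ))⁻¹ • (H ^ (l+1) • N^[l+1] x))
            + ∑ l ∈ Finset.range (i+1), ((l.factorial : ℚ))⁻¹ • (H ^ l • N^[l] g) := by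
        rw [expand, m1]; abel
      rw [key]
      refine add_mem ?_ ?_
      · refine AddSubgroup.sum_mem _ fun l _ => AddSubgroup.subset_closure ?_
        refine ⟨l+1, l+1, 1, Nat.le_add_left 1 l, Nat.le_add_left 1 l, ?_⟩
        norm_num
      · refine AddSubgroup.sum_mem _ fun l _ => ?_
        match l with
        | 0 =>
          simpa using ih
        | (l+1) =>
          exact Phi_mem (l+1) (Nat.le_add_left 1 l) g ih
  exact hVS (main i)

end
end

section
/- Let d ≥ 1 and N ≥ 0 be integers and let A, B, C ∈ M_d(R) be matrices with det A, det B, det C all nonzero, such that: every entry of B is divisible by u^N in R; every entry of the inverse matrix A^{−1} ∈ M_d(k((u))) has u-adic valuation ≥ −N; and B·φ(C) = C·A, where φ is applied to C entrywise. Then det C is a unit of R and ord(det A) = ord(det B) = N·d; consequently C ∈ GL_d(R), u^{−N}B ∈ GL_d(R) and u^{N}A^{−1} ∈ GL_d(R). -/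
/-!
Taking determinants in `B · φ(C) = C · A` gives
`ord det B + ord φ(det C) = ord det C + ord det A`. Divisibility of `B` by `u^N` gives
`ord det B ≥ N d`, and `A⁻¹` having poles of order at most `N` gives a matrix `A'` over `R`
with `A A' = u^N`, so `ord det A ≤ N d`. Since `φ(u) = u^p`, `ord φ(det C) ≥ p · ord det C`,
hence `(p - 1) · ord det C ≤ 0`; so `det C` is a unit and every inequality is an equality.
-/

open PowerSeries

namespace Matrix

variable {m n R : Type*}

theorem exists_eq_smul_of_forall_dvd [Semigroup R] {x : R} {B : Matrix m n R}
    (h : ∀ i j, x ∣ B i j) : ∃ B' : Matrix m n R, B = x • B' := by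
  choose B' hB' using h
  exact ⟨of B', ext hB'⟩

theorem exists_mul_eq_smul_one_of_det_dvd [Fintype n] [DecidableEq n] [CommRing R] [IsDomain R]
    {A : Matrix n n R} {x : R} (hA : A.det ≠ 0) (h : ∀ i j, A.det ∣ x * A.adjugate i j) :
    ∃ A' : Matrix n n R, A * A' = x • 1 ∧ A' * A = x • 1 := by
  obtain ⟨A', hA'⟩ := exists_eq_smul_of_forall_dvd (x := A.det) (B := x • A.adjugate) h
  refine ⟨A', smul_right_injective _ hA ?_, smul_right_injective _ hA ?_⟩
  · calc A.det • (A * A') = x • (A * A.adjugate) := by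
          rw [← Matrix.mul_smul, ← hA', Matrix.mul_smul]
      _ = A.det • x • 1 := by rw [mul_adjugate, smul_comm]
  · calc A.det • (A' * A) = x • (A.adjugate * A) := by
          rw [← Matrix.smul_mul, ← hA', Matrix.smul_mul]
      _ = A.det • x • 1 := by rw [adjugate_mul, smul_comm]

end Matrix

namespace PowerSeries

variable {k : Type*} [Field k]

theorem isUnit_of_order_eq_zero {f : k⟦X⟧} (h : f.order = 0) : IsUnit f := by
  rw [isUnit_iff_constantCoeff, isUnit_iff_ne_zero]
  exact order_ne_zero_iff_constCoeff_eq_zero.not.mp (not_not.mpr h)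

theorem exists_isUnit_eq_X_pow_mul_of_order_eq {f : k⟦X⟧} {n : ℕ} (h : f.order = n) :
    ∃ w : k⟦X⟧, IsUnit w ∧ f = X ^ n * w := by
  have hf : f ≠ 0 := by rintro rfl; simp at h
  refine ⟨divXPowOrder f, isUnit_divided_by_X_pow_order hf, ?_⟩
  rw [← ENat.natCast_inj.mp ((coe_toNat_order hf).trans h), X_pow_order_mul_divXPowOrder]

end PowerSeries

section Frobenius

variable {R : Type*} [CommRing R] (p : ℕ) (φ : R⟦X⟧ →+* R⟦X⟧)

theorem map_X_eq_X_pow_of_coeff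
    (hφ1 : ∀ (f : R⟦X⟧) (n : ℕ), coeff (p * n) (φ f) = (coeff n f) ^ p)
    (hφ2 : ∀ (f : R⟦X⟧) (m : ℕ), ¬ p ∣ m → coeff m (φ f) = 0) (hp : p ≠ 0) :
    φ X = X ^ p := by
  ext n
  rw [coeff_X_pow]
  by_cases hpn : p ∣ n
  · obtain ⟨m, rfl⟩ := hpn
    rw [hφ1, coeff_X]
    rcases eq_or_ne m 1 with rfl | hm
    · simp
    · have : p * m ≠ p := fun h => hm (by simpa [hp] using h)
      simp [hm, this, zero_pow hp]
  · rw [hφ2 _ _ hpn, if_neg]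
    rintro rfl
    exact hpn dvd_rfl

theorem mul_order_le_order_map [Nontrivial R] (hφX : φ X = X ^ p) (f : R⟦X⟧) :
    p * f.order ≤ (φ f).order := by
  rcases eq_or_ne f 0 with rfl | hf
  · simp
  calc p * f.order = ((X : R⟦X⟧) ^ (p * f.order.toNat)).order := by
        rw [order_X_pow, Nat.cast_mul, coe_toNat_order hf]
    _ ≤ (φ f).order := by
        conv_rhs => rw [← X_pow_order_mul_divXPowOrder (f := f), map_mul, map_pow, hφX, ← pow_mul]
        exact le_self_add.trans (le_order_mul _ _)

end Frobenius

/-- Applied with `a, a', b', c, e` the orders of `det A, det A', det B', det C, φ (det C)`. -/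
theorem ENat.eq_zero_of_add_add_eq_add_of_mul_le {p M : ℕ} (hp : 2 ≤ p) {a a' b' c e : ℕ∞}
    (hc : c ≠ ⊤) (ha : a + a' = M) (hb : M + b' + e = c + a) (he : p * c ≤ e) :
    c = 0 ∧ a' = 0 ∧ b' = 0 := by
  have ha_top : a ≠ ⊤ := fun h => by simp [h] at ha
  have ha'_top : a' ≠ ⊤ := fun h => by simp [h] at ha
  have hsum_top : M + b' + e ≠ ⊤ := hb ▸ WithTop.add_ne_top.mpr ⟨hc, ha_top⟩
  lift a to ℕ using ha_top
  lift a' to ℕ using ha'_top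
  lift b' to ℕ using fun h => by simp [h] at hsum_top
  lift e to ℕ using fun h => by simp [h] at hsum_top
  lift c to ℕ using hc
  norm_cast at ha hb he ⊢
  have : 2 * c ≤ p * c := Nat.mul_le_mul_right c hp
  omega

theorem statement15_general
    (p : ℕ) [Fact p.Prime] (k : Type) [Field k]
    (φ : PowerSeries k →+* PowerSeries k)
    (hφ1 : ∀ (f : PowerSeries k) (n : ℕ),
      PowerSeries.coeff (p * n) (φ f) = (PowerSeries.coeff n f) ^ p)
    (hφ2 : ∀ (f : PowerSeries k) (m : ℕ), ¬ p ∣ m → PowerSeries.coeff m (φ f) = 0)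
    (d : ℕ) (N : ℕ)
    (A B C : Matrix (Fin d) (Fin d) (PowerSeries k))
    (hA : A.det ≠ 0) (hC : C.det ≠ 0)
    (hBdiv : ∀ i j, (PowerSeries.X : PowerSeries k) ^ N ∣ B i j)
    (hAinv : ∀ i j, A.det ∣ (PowerSeries.X : PowerSeries k) ^ N * A.adjugate i j)
    (heq : B * C.map φ = C * A) :
    IsUnit C.det ∧
    (∃ w : PowerSeries k, IsUnit w ∧ A.det = PowerSeries.X ^ (N * d) * w) ∧
    (∃ w : PowerSeries k, IsUnit w ∧ B.det = PowerSeries.X ^ (N * d) * w) ∧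
    (∃ B' : Matrix (Fin d) (Fin d) (PowerSeries k),
      (∀ i j, B i j = PowerSeries.X ^ N * B' i j) ∧ IsUnit B'.det) ∧
    (∃ A' : Matrix (Fin d) (Fin d) (PowerSeries k),
      A * A' = ((PowerSeries.X : PowerSeries k) ^ N) • (1 : Matrix (Fin d) (Fin d) (PowerSeries k)) ∧
      A' * A = ((PowerSeries.X : PowerSeries k) ^ N) • (1 : Matrix (Fin d) (Fin d) (PowerSeries k)) ∧
      IsUnit A'.det) := by
  have hp := (Fact.out : p.Prime).two_le
  have hφX := map_X_eq_X_pow_of_coeff p φ hφ1 hφ2 (by omega)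
  obtain ⟨B', hB'⟩ := Matrix.exists_eq_smul_of_forall_dvd hBdiv
  obtain ⟨A', hAA', hA'A⟩ := Matrix.exists_mul_eq_smul_one_of_det_dvd hA hAinv
  have hdetB : B.det = X ^ (N * d) * B'.det := by
    rw [hB', Matrix.det_smul, Fintype.card_fin, ← pow_mul]
  have hdetA : A.det * A'.det = X ^ (N * d) := by
    rw [← Matrix.det_mul, hAA', Matrix.det_smul, Matrix.det_one, mul_one, Fintype.card_fin,
      ← pow_mul]
  have hdet : B.det * φ C.det = C.det * A.det := by
    simpa [Matrix.det_mul, RingHom.map_det] using congrArg Matrix.det heq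
  obtain ⟨hc, ha', hb'⟩ := ENat.eq_zero_of_add_add_eq_add_of_mul_le (a := A.det.order)
    (a' := A'.det.order) (b' := B'.det.order) hp (order_eq_top.not.mpr hC)
    (by rw [← order_mul, hdetA, order_X_pow])
    (by rw [← order_X_pow (R := k), ← order_mul, ← hdetB, ← order_mul, ← order_mul, hdet])
    (mul_order_le_order_map p φ hφX C.det)
  have ha : A.det.order = ↑(N * d) := by
    rw [← order_X_pow (R := k), ← hdetA, order_mul, ha', add_zero]
  exact ⟨isUnit_of_order_eq_zero hc, exists_isUnit_eq_X_pow_mul_of_order_eq ha,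
    ⟨B'.det, isUnit_of_order_eq_zero hb', hdetB⟩,
    ⟨B', fun i j => by rw [hB']; rfl, isUnit_of_order_eq_zero hb'⟩,
    ⟨A', hAA', hA'A, isUnit_of_order_eq_zero ha'⟩⟩

/-- the matrix-valuation argument over `R = k[[u]]`.  Valuation conditions
are expressed by divisibility in the discrete valuation ring `k[[u]]`: "every entry of
`A⁻¹` has `u`-adic valuation `≥ -N`" becomes `det A ∣ X^N · adj(A)_{ij}`, and
"`ord(det A) = N·d`" becomes `det A = X^{N·d} · (unit)`. -/
theorem statement15
    (p : ℕ) [Fact p.Prime] (k : Type) [Field k] [CharP k p] [PerfectField k]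
    (φ : PowerSeries k →+* PowerSeries k)
    (hφ1 : ∀ (f : PowerSeries k) (n : ℕ),
      PowerSeries.coeff (p * n) (φ f) = (PowerSeries.coeff n f) ^ p)
    (hφ2 : ∀ (f : PowerSeries k) (m : ℕ), ¬ p ∣ m → PowerSeries.coeff m (φ f) = 0)
    (d : ℕ) (hd : 1 ≤ d) (N : ℕ)
    (A B C : Matrix (Fin d) (Fin d) (PowerSeries k))
    (hA : A.det ≠ 0) (hB : B.det ≠ 0) (hC : C.det ≠ 0)
    (hBdiv : ∀ i j, (PowerSeries.X : PowerSeries k) ^ N ∣ B i j)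
    (hAinv : ∀ i j, A.det ∣ (PowerSeries.X : PowerSeries k) ^ N * A.adjugate i j)
    (heq : B * C.map φ = C * A) :
    IsUnit C.det ∧
    (∃ w : PowerSeries k, IsUnit w ∧ A.det = PowerSeries.X ^ (N * d) * w) ∧
    (∃ w : PowerSeries k, IsUnit w ∧ B.det = PowerSeries.X ^ (N * d) * w) ∧
    (∃ B' : Matrix (Fin d) (Fin d) (PowerSeries k),
      (∀ i j, B i j = PowerSeries.X ^ N * B' i j) ∧ IsUnit B'.det) ∧
    (∃ A' : Matrix (Fin d) (Fin d) (PowerSeries k),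
      A * A' = ((PowerSeries.X : PowerSeries k) ^ N) • (1 : Matrix (Fin d) (Fin d) (PowerSeries k)) ∧
      A' * A = ((PowerSeries.X : PowerSeries k) ^ N) • (1 : Matrix (Fin d) (Fin d) (PowerSeries k)) ∧
      IsUnit A'.det) :=
  statement15_general p k φ hφ1 hφ2 d N A B C hA hC hBdiv hAinv heq
end

section
/- Let G be a group, N a normal subgroup of G, H a subgroup of G with N ⊆ H, and M an abelian group with a G-action by group automorphisms such that M^N = 0 (the only N-fixed element of M is 0). Then every 1-cocycle c : G → M (i.e. a function with c(gg') = c(g) + g·c(g') for all g, g' ∈ G) which vanishes on H is identically zero. -/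
/-- let `G` be a group, `N ⊴ G`, `N ⊆ H ≤ G`, and `M` an abelian group
with a `G`-action by automorphisms such that `M^N = 0`.  Then every 1-cocycle
`c : G → M` vanishing on `H` is identically zero. -/
theorem statement16
    (G : Type) [Group G] (N H : Subgroup G) [N.Normal] (hNH : N ≤ H)
    (M : Type) [AddCommGroup M] [DistribMulAction G M]
    (hMN : ∀ m : M, (∀ g ∈ N, g • m = m) → m = 0)
    (c : G → M)
    (hc : ∀ g g' : G, c (g * g') = c g + g • c g')
    (hH : ∀ h ∈ H, c h = 0) :
    ∀ g : G, c g = 0 := by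
  intro g
  apply hMN
  intro n hn
  have h1 : c (n * g) = n • c g := by
    rw [hc, hH n (hNH hn), zero_add]
  have h2 : g⁻¹ * n * g ∈ N := (Subgroup.Normal.conj_mem' ‹N.Normal› n hn g)
  have h3 : c (n * g) = c g := by
    have : n * g = g * (g⁻¹ * n * g) := by group
    rw [this, hc, hH _ (hNH h2), smul_zero, add_zero]
  rw [← h1, h3]
end

section
/- Let M be a finite free 𝔖-module and let f : M → M be an additive map satisfying f(am) = φ(a)f(m) for all a ∈ 𝔖 and m ∈ M. Then the set M^{f=1} = {m ∈ M : f(m) = m} is an 𝔽-subspace of M which is finite-dimensional over 𝔽. -/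
/-!
Since `φ u = u ^ p` with `p ≥ 2`, a fixed vector `m ∈ u ^ n M` with `n ≥ 1` satisfies
`m = f m ∈ u ^ (p n) M ⊆ u ^ (n + 1) M`, so a fixed vector vanishing modulo `u` lies in
`⋂ₙ u ^ n M = 0`. Hence reduction modulo `u` is injective on the additive group `M^{f=1}`,
which thus embeds into the finite set `M / u M ≅ (k ⊗ 𝔽) ^ d`. Being finite, `M^{f=1}` is spanned
over `𝔽` by its own elements.
-/

open PowerSeries TensorProduct

attribute [local instance] ZMod.algebra

noncomputable section

/-- The inclusion `𝔽 → 𝔖 = (k ⊗_{𝔽_p} 𝔽)[[u]]` as constant power series. -/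
def iFF (p : ℕ) [Fact p.Prime] (k 𝔽 : Type) [Field k] [Fintype k] [CharP k p]
    [Field 𝔽] [Fintype 𝔽] [CharP 𝔽 p] : 𝔽 →+* PowerSeries (k ⊗[ZMod p] 𝔽) :=
  (PowerSeries.C (R := k ⊗[ZMod p] 𝔽)).comp
    (Algebra.TensorProduct.includeRight (R := ZMod p) (A := k) (B := 𝔽)).toRingHom

theorem Module.Basis.exists_eq_smul_of_forall_dvd_repr {R M ι : Type*} [CommRing R]
    [AddCommGroup M] [Module R M] [Fintype ι] (b : Module.Basis ι R M) {x : R} {w : M}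
    (h : ∀ i, x ∣ b.repr w i) : ∃ w₀ : M, w = x • w₀ := by
  choose g hg using h
  refine ⟨∑ i, g i • b i, ?_⟩
  conv_lhs => rw [← b.sum_repr w]
  simp only [Finset.smul_sum, smul_smul, ← hg]

namespace PowerSeries

theorem eq_zero_of_forall_X_pow_dvd {A : Type*} [CommRing A] {g : A⟦X⟧}
    (h : ∀ n, (X : A⟦X⟧) ^ n ∣ g) : g = 0 := by
  ext n
  simpa using X_pow_dvd_iff.mp (h (n + 1)) n n.lt_succ_self

theorem map_X_eq_X_pow {A : Type*} [CommRing A] {p : ℕ} (hp : p ≠ 0)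
    {φ : A⟦X⟧ →+* A⟦X⟧}
    (hφ0 : ∀ (g : A⟦X⟧) (m : ℕ), ¬ p ∣ m → coeff m (φ g) = 0)
    (hφ1 : ∀ (g : A⟦X⟧) (n : ℕ), coeff (p * n) (φ g) = constantCoeff (φ (C (coeff n g)))) :
    φ X = X ^ p := by
  ext m
  rw [coeff_X_pow]
  by_cases hm : p ∣ m
  · obtain ⟨j, rfl⟩ := hm
    simp only [hφ1, coeff_X, Nat.mul_eq_left hp]
    split_ifs <;> simp
  · rw [hφ0 _ _ hm, if_neg]
    rintro rfl
    exact hm dvd_rfl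

section FixedPoints

variable {A M ι : Type*} [CommRing A] [AddCommGroup M] [Module A⟦X⟧ M] [Fintype ι]
  (b : Module.Basis ι A⟦X⟧ M) {φ : A⟦X⟧ →+* A⟦X⟧} (hφ : X ^ 2 ∣ φ X) (f : M →ₛₗ[φ] M)
include b hφ

theorem X_pow_dvd_repr_of_fixed {w : M} (hw : f w = w)
    (h0 : ∀ i, constantCoeff (b.repr w i) = 0) (n : ℕ) (i : ι) :
    (X : A⟦X⟧) ^ (n + 1) ∣ b.repr w i := by
  induction n generalizing i with
  | zero => simpa [X_dvd_iff] using h0 i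
  | succ n ih =>
    obtain ⟨w₀, rfl⟩ := b.exists_eq_smul_of_forall_dvd_repr ih
    have hX : (X : A⟦X⟧) ^ (n + 2) ∣ φ (X ^ (n + 1)) :=
      calc (X : A⟦X⟧) ^ (n + 2) ∣ (X ^ 2) ^ (n + 1) := by
            rw [← pow_mul]
            exact pow_dvd_pow _ (by omega)
        _ ∣ φ (X ^ (n + 1)) := by rw [map_pow]; exact pow_dvd_pow_of_dvd hφ _
    rw [← hw, f.map_smulₛₗ, map_smul, Finsupp.smul_apply, smul_eq_mul]
    exact hX.mul_right _

theorem eq_zero_of_fixed_of_constantCoeff_repr_eq_zero {w : M} (hw : f w = w)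
    (h0 : ∀ i, constantCoeff (b.repr w i) = 0) : w = 0 := by
  refine b.repr.injective (Finsupp.ext fun i => ?_)
  rw [map_zero, Finsupp.zero_apply]
  refine eq_zero_of_forall_X_pow_dvd fun n => ?_
  exact (pow_dvd_pow X n.le_succ).trans (X_pow_dvd_repr_of_fixed b hφ f hw h0 n i)

theorem finite_setOf_fixed [Finite A] : {m : M | f m = m}.Finite := by
  refine Set.Finite.of_finite_image (f := fun m i => constantCoeff (b.repr m i))
    (Set.toFinite _) ?_
  intro m hm m' hm' h
  rw [← sub_eq_zero]
  refine eq_zero_of_fixed_of_constantCoeff_repr_eq_zero b hφ f ?_ fun i => ?_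
  · rw [map_sub, hm, hm']
  · simpa [sub_eq_zero] using congrFun h i

end FixedPoints

end PowerSeries

theorem Set.Finite.exists_fin_forall_eq_sum_smul {K R M : Type*} [Semiring K] [Semiring R]
    [AddCommMonoid M] [Module R M] (ψ : K →+* R) {S : Set M} (hS : S.Finite) :
    ∃ (n : ℕ) (v : Fin n → M), (∀ i, v i ∈ S) ∧
      ∀ m ∈ S, ∃ c : Fin n → K, m = ∑ i, ψ (c i) • v i := by
  obtain ⟨n, v, hv⟩ := hS.fin_embedding
  refine ⟨n, v, fun i => hv ▸ Set.mem_range_self i, ?_⟩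
  rintro m hm
  obtain ⟨i, rfl⟩ := hv ▸ hm
  exact ⟨Pi.single i 1, by simp [Pi.single_apply]⟩

theorem map_iFF (p : ℕ) [Fact p.Prime] (k 𝔽 : Type) [Field k] [Fintype k]
    [CharP k p] [Field 𝔽] [Fintype 𝔽] [CharP 𝔽 p]
    {φ : PowerSeries (k ⊗[ZMod p] 𝔽) →+* PowerSeries (k ⊗[ZMod p] 𝔽)}
    (hφC : ∀ (a : k) (b : 𝔽),
      φ (PowerSeries.C (a ⊗ₜ[ZMod p] b)) = PowerSeries.C ((a ^ p) ⊗ₜ[ZMod p] b))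
    (c : 𝔽) : φ (iFF p k 𝔽 c) = iFF p k 𝔽 c := by
  have h := hφC 1 c
  rw [one_pow] at h
  exact h

/-- if `M` is a finite free `𝔖`-module and `f : M → M` is additive with
`f(a•m) = φ(a)•f(m)`, then `M^{f=1}` is an `𝔽`-subspace of `M` of finite dimension
over `𝔽` (it is spanned by finitely many fixed vectors). -/
theorem statement17
    (p : ℕ) [Fact p.Prime] (k 𝔽 : Type) [Field k] [Fintype k] [CharP k p]
    [Field 𝔽] [Fintype 𝔽] [CharP 𝔽 p]
    (φ : PowerSeries (k ⊗[ZMod p] 𝔽) →+* PowerSeries (k ⊗[ZMod p] 𝔽))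
    (hφC : ∀ (a : k) (b : 𝔽),
      φ (PowerSeries.C (a ⊗ₜ[ZMod p] b)) = PowerSeries.C ((a ^ p) ⊗ₜ[ZMod p] b))
    (hφ0 : ∀ (f : PowerSeries (k ⊗[ZMod p] 𝔽)) (m : ℕ), ¬ p ∣ m →
      PowerSeries.coeff m (φ f) = 0)
    (hφ1 : ∀ (f : PowerSeries (k ⊗[ZMod p] 𝔽)) (n : ℕ),
      PowerSeries.coeff (p * n) (φ f) =
        PowerSeries.constantCoeff (φ (PowerSeries.C (PowerSeries.coeff n f))))
    (M : Type) [AddCommGroup M] [Module (PowerSeries (k ⊗[ZMod p] 𝔽)) M]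
    [Module.Finite (PowerSeries (k ⊗[ZMod p] 𝔽)) M]
    [Module.Free (PowerSeries (k ⊗[ZMod p] 𝔽)) M]
    (f : M → M)
    (hadd : ∀ x y, f (x + y) = f x + f y)
    (hsmul : ∀ (a : PowerSeries (k ⊗[ZMod p] 𝔽)) (m : M), f (a • m) = φ a • f m) :
    (∀ (c : 𝔽) (m : M), f m = m → f ((iFF p k 𝔽 c) • m) = (iFF p k 𝔽 c) • m) ∧
    (∀ m m' : M, f m = m → f m' = m' → f (m + m') = m + m') ∧
    (∃ (n : ℕ) (v : Fin n → M), (∀ i, f (v i) = v i) ∧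
      ∀ m : M, f m = m → ∃ c : Fin n → 𝔽, m = ∑ i, (iFF p k 𝔽 (c i)) • v i) := by
  have hp := (Fact.out : p.Prime)
  have hφX : X ^ 2 ∣ φ X := by
    rw [map_X_eq_X_pow hp.ne_zero hφ0 hφ1]
    exact pow_dvd_pow X hp.two_le
  let F : M →ₛₗ[φ] M := { toFun := f, map_add' := hadd, map_smul' := hsmul }
  have : Finite (k ⊗[ZMod p] 𝔽) := Module.finite_of_finite (ZMod p)
  have hfin := finite_setOf_fixed (Module.Free.chooseBasis _ M) hφX F
  refine ⟨fun c m hm => ?_, fun m m' hm hm' => ?_, hfin.exists_fin_forall_eq_sum_smul _⟩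
  · rw [hsmul, map_iFF p k 𝔽 hφC, hm]
  · rw [hadd, hm, hm']

end
end
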